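/- Let 𝒢 be a GRN with associated PRN ℛ, and let τ be an appendage node of 𝒢. Then (τ,R) and (τ,P) are path-equivalent in the appendage subnetwork of ℛ if and only if τ lies on a directed cycle of 𝒢 all of whose nodes are appendage nodes (a self-loop at τ counts as such a cycle). -/

import Mathlib

open List Relation

/- In the PRN on `V × Bool`, the node `(v, false)` is the mRNA node `v^R`
   and `(v, true)` is the protein node `v^P`. -/

/-- Arrow relation of the PRN associated to a GRN with arrow relation `E`:
arrows `(v,R) → (v,P)` for every `v`, and `(u,P) → (v,R)` whenever `E u v`. -/
def prnAdj {V : Type*} (E : V → V → Prop) : V × Bool → V × Bool → Prop :=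
  fun a b =>
    (a.1 = b.1 ∧ a.2 = false ∧ b.2 = true) ∨
    (E a.1 b.1 ∧ a.2 = true ∧ b.2 = false)

/-- The lift of a path `σ₁ → ⋯ → σ_m` in the GRN to the path
`(σ₁,R) → (σ₁,P) → ⋯ → (σ_m,R) → (σ_m,P)` in the PRN. -/
def liftPath {V : Type*} (l : List V) : List (V × Bool) :=
  l.flatMap fun v => [(v, false), (v, true)]

/-- A simple path: a nonempty directed path visiting each node at most once. -/
def IsSimplePath {V : Type*} (E : V → V → Prop) (l : List V) : Prop :=
  l ≠ [] ∧ l.Chain' E ∧ l.Nodup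

/-- A simple path from `a` to `b`. -/
def IsSimplePathFrom {V : Type*} (E : V → V → Prop) (a b : V) (l : List V) : Prop :=
  IsSimplePath E l ∧ l.head? = some a ∧ l.getLast? = some b

/-- A node is simple if it lies on some simple path from the input to the output. -/
def IsSimpleNode {V : Type*} (E : V → V → Prop) (ι o v : V) : Prop :=
  ∃ l, IsSimplePathFrom E ι o l ∧ v ∈ l

/-- A node is super-simple if it lies on every simple path from the input to the output. -/
def IsSuperSimpleNode {V : Type*} (E : V → V → Prop) (ι o v : V) : Prop :=
  ∀ l, IsSimplePathFrom E ι o l → v ∈ l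

/-- A node is appendage if it lies on no simple path from the input to the output. -/
def IsAppendageNode {V : Type*} (E : V → V → Prop) (ι o v : V) : Prop :=
  ¬ IsSimpleNode E ι o v

/-- An appendage path from `a` to `b`: a simple path from `a` to `b` each of whose
nodes, except possibly `a` and `b`, is an appendage node. -/
def IsAppendagePath {V : Type*} (E : V → V → Prop) (ι o a b : V) (l : List V) : Prop :=
  IsSimplePathFrom E a b l ∧ ∀ v ∈ l, v ≠ a → v ≠ b → IsAppendageNode E ι o v

/-- A directed cycle: a nonempty closed directed walk visiting each of its nodes
exactly once (a self-loop is a cycle of length one). -/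
def IsCycle {V : Type*} (E : V → V → Prop) (c : List V) : Prop :=
  c ≠ [] ∧ c.Chain' E ∧ c.Nodup ∧
    ∃ a b, c.head? = some a ∧ c.getLast? = some b ∧ E b a

/-- Arrow relation of the appendage subnetwork: the induced subgraph on appendage nodes. -/
def appendageAdj {V : Type*} (E : V → V → Prop) (ι o : V) : V → V → Prop :=
  fun a b => E a b ∧ IsAppendageNode E ι o a ∧ IsAppendageNode E ι o b

/-- Two appendage nodes are path-equivalent if each is reachable from the other by a
directed path lying entirely within the appendage subnetwork. -/
def PathEquiv {V : Type*} (E : V → V → Prop) (ι o a b : V) : Prop :=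
  Relation.ReflTransGen (appendageAdj E ι o) a b ∧
  Relation.ReflTransGen (appendageAdj E ι o) b a

/-- A node `x` is between `a` and `b` if some input-to-output simple path visits
`a`, `x`, `b` in that order. -/
def Between {V : Type*} (E : V → V → Prop) (ι o a x b : V) : Prop :=
  ∃ l, IsSimplePathFrom E ι o l ∧ [a, x, b].Sublist l

/-!
Protein nodes `(v,P)` have only the arrows `(v,P) → (u,R)` for `v → u`, and mRNA nodes only
`(v,R) → (v,P)`, so every simple path from `(ι,R)` to `(o,P)` in the PRN is the lift of a simple
path from `ι` to `o` in the GRN. Hence `(v,R)` and `(v,P)` are appendage exactly when `v` is,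
and an appendage walk from `(τ,P)` back to `(τ,R)` projects to a nontrivial closed appendage
walk at `τ`, which can be shortened to an appendage cycle through `τ`; conversely such a cycle
lifts to the PRN.
-/

section SimplePaths

variable {α : Type*} {R : α → α → Prop}

theorem exists_isSimplePathFrom_of_reflTransGen {a b : α} (h : ReflTransGen R a b) :
    ∃ l, IsSimplePathFrom R a b l := by
  induction h using ReflTransGen.head_induction_on with
  | refl => exact ⟨[b], ⟨cons_ne_nil _ _, isChain_singleton _, nodup_singleton _⟩, rfl, rfl⟩
  | @head a c hac _ ih =>
    obtain ⟨l, ⟨hne, (hchain : l.IsChain R), hnodup⟩, hhead, hlast⟩ := ih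
    by_cases ha : a ∈ l
    · obtain ⟨p, q, rfl⟩ := append_of_mem ha
      refine ⟨a :: q, ⟨cons_ne_nil _ _, hchain.suffix (suffix_append _ _),
        hnodup.sublist (sublist_append_right _ _)⟩, rfl, ?_⟩
      rwa [getLast?_append_of_ne_nil _ (cons_ne_nil _ _)] at hlast
    · refine ⟨a :: l, ⟨cons_ne_nil _ _, hchain.cons ?_, nodup_cons.2 ⟨ha, hnodup⟩⟩, rfl, ?_⟩
      · simpa [hhead] using hac
      · rwa [getLast?_cons_of_ne_nil hne]

end SimplePaths

section Cycles

variable {α : Type*} {R : α → α → Prop}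

theorem IsCycle.transGen {c : List α} (hc : IsCycle R c) {a : α} (ha : a ∈ c) :
    TransGen R a a := by
  obtain ⟨-, (hchain : c.IsChain R), -, first, last, hfirst, hlast, hclose⟩ := hc
  obtain ⟨p, q, rfl⟩ := append_of_mem ha
  have to_last : ReflTransGen R a last := by
    refine relationReflTransGen_of_exists_isChain_cons q (hchain.suffix (suffix_append _ _)) ?_
    rw [getLast?_append_of_ne_nil _ (cons_ne_nil _ _), getLast?_eq_some_getLast (cons_ne_nil _ _)]
      at hlast
    exact Option.some_injective _ hlast
  have from_first : ReflTransGen R first a := by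
    have hprefix : (p ++ [a]).IsChain R := hchain.prefix ⟨q, by simp⟩
    cases p with
    | nil => cases hfirst; rfl
    | cons x p =>
      cases hfirst
      exact relationReflTransGen_of_exists_isChain_cons _ hprefix (by simp)
  exact (TransGen.tail' to_last hclose).trans_left from_first

theorem exists_isCycle_of_transGen {a : α} (h : TransGen R a a) : ∃ c, IsCycle R c ∧ a ∈ c := by
  obtain ⟨b, hab, hba⟩ := TransGen.tail'_iff.1 h
  obtain ⟨l, ⟨hne, hchain, hnodup⟩, hhead, hlast⟩ := exists_isSimplePathFrom_of_reflTransGen hab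
  exact ⟨l, ⟨hne, hchain, hnodup, a, b, hhead, hlast, hba⟩, mem_of_mem_head? hhead⟩

theorem transGen_self_iff_exists_isCycle {a : α} : TransGen R a a ↔ ∃ c, IsCycle R c ∧ a ∈ c :=
  ⟨exists_isCycle_of_transGen, fun ⟨_, hc, ha⟩ => hc.transGen ha⟩

theorem isCycle_restrict_iff {P : α → Prop} {c : List α} :
    IsCycle (fun u v => R u v ∧ P u ∧ P v) c ↔ IsCycle R c ∧ ∀ v ∈ c, P v := by
  constructor
  · rintro ⟨hne, (hchain : c.IsChain _), hnodup, a, b, ha, hb, hba, -, hPa⟩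
    refine ⟨⟨hne, hchain.imp fun _ _ h => h.1, hnodup, a, b, ha, hb, hba⟩, ?_⟩
    refine hchain.induction P _ (fun _ _ h _ => h.2.2) fun hne' => ?_
    rw [head?_eq_some_head hne', Option.some_inj] at ha
    rwa [ha]
  · rintro ⟨⟨hne, (hchain : c.IsChain R), hnodup, a, b, ha, hb, hba⟩, hP⟩
    refine ⟨hne, hchain.imp_of_mem_imp fun u v hu hv h => ⟨h, hP u hu, hP v hv⟩, hnodup,
      a, b, ha, hb, hba, hP b (mem_of_mem_getLast? hb), hP a (mem_of_mem_head? ha)⟩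

end Cycles

section LiftPath

variable {V : Type*} {E : V → V → Prop}

@[simp] theorem liftPath_nil : liftPath ([] : List V) = [] := rfl

@[simp] theorem liftPath_cons (v : V) (l : List V) :
    liftPath (v :: l) = (v, false) :: (v, true) :: liftPath l := rfl

@[simp] theorem liftPath_eq_nil {l : List V} : liftPath l = [] ↔ l = [] := by
  cases l <;> simp

@[simp] theorem mem_liftPath {v : V} {b : Bool} {l : List V} : (v, b) ∈ liftPath l ↔ v ∈ l := by
  induction l with
  | nil => simp
  | cons w l ih => cases b <;> simp [ih]

@[simp] theorem nodup_liftPath {l : List V} : (liftPath l).Nodup ↔ l.Nodup := by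
  induction l with
  | nil => simp
  | cons w l ih => simp [ih]

theorem head?_liftPath (l : List V) : (liftPath l).head? = l.head?.map (·, false) := by
  cases l <;> simp

theorem getLast?_liftPath (l : List V) : (liftPath l).getLast? = l.getLast?.map (·, true) := by
  induction l with
  | nil => simp
  | cons w l ih => cases l <;> simp_all

theorem isChain_liftPath_iff {l : List V} : (liftPath l).IsChain (prnAdj E) ↔ l.IsChain E := by
  induction l with
  | nil => simp
  | cons w l ih => cases l <;> simp_all [prnAdj]

theorem exists_eq_liftPath :
    ∀ {L : List (V × Bool)}, L.IsChain (prnAdj E) → L.head?.map Prod.snd = some false →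
      L.getLast?.map Prod.snd = some true → ∃ l, L = liftPath l
  | [], _, hhead, _ => by simp at hhead
  | [x], _, hhead, hlast => by simp_all
  | (v, false) :: y :: L, hchain, _, hlast => by
    obtain ⟨hvy, hchain⟩ := isChain_cons_cons.1 hchain
    obtain rfl : y = (v, true) := by
      rcases hvy with ⟨h1, -, h3⟩ | ⟨-, h2, -⟩
      · exact Prod.ext h1.symm h3
      · cases h2
    cases L with
    | nil => exact ⟨[v], rfl⟩
    | cons z L =>
      obtain ⟨hvz, hchain⟩ := isChain_cons_cons.1 hchain
      have hz : z.2 = false := by rcases hvz with ⟨-, h, -⟩ | ⟨-, -, h⟩ <;> simp_all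
      obtain ⟨l, hl⟩ := exists_eq_liftPath hchain (by simp [hz]) (by simpa using hlast)
      exact ⟨v :: l, by simp [hl]⟩
  | (_, true) :: _ :: _, _, hhead, _ => by simp at hhead

end LiftPath

section PRN

variable {V : Type*} {E : V → V → Prop} {ι o : V}

theorem isSimplePathFrom_liftPath_iff {a b : V} {l : List V} :
    IsSimplePathFrom (prnAdj E) (a, false) (b, true) (liftPath l) ↔ IsSimplePathFrom E a b l := by
  simp only [IsSimplePathFrom, IsSimplePath, ne_eq, liftPath_eq_nil, nodup_liftPath,
    head?_liftPath, getLast?_liftPath, Option.map_eq_some_iff, Prod.mk.injEq, and_true,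
    exists_eq_right]
  exact and_congr_left' (and_congr_right' (and_congr_left' isChain_liftPath_iff))

theorem isSimpleNode_prnAdj_iff {v : V} {b : Bool} :
    IsSimpleNode (prnAdj E) (ι, false) (o, true) (v, b) ↔ IsSimpleNode E ι o v := by
  constructor
  · rintro ⟨L, hL, hv⟩
    obtain ⟨l, rfl⟩ := exists_eq_liftPath hL.1.2.1 (by simp [hL.2.1]) (by simp [hL.2.2])
    exact ⟨l, isSimplePathFrom_liftPath_iff.1 hL, mem_liftPath.1 hv⟩
  · rintro ⟨l, hl, hv⟩
    exact ⟨liftPath l, isSimplePathFrom_liftPath_iff.2 hl, mem_liftPath.2 hv⟩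

theorem isAppendageNode_prnAdj_iff {v : V} {b : Bool} :
    IsAppendageNode (prnAdj E) (ι, false) (o, true) (v, b) ↔ IsAppendageNode E ι o v :=
  isSimpleNode_prnAdj_iff.not

end PRN

section AppendageSubnetwork

variable {V : Type*} {E : V → V → Prop} {ι o : V}

local notation "A" => appendageAdj E ι o
local notation "Aᴾ" => appendageAdj (prnAdj E) (ι, false) (o, true)

theorem appendageAdj_prnAdj_iff {x y : V × Bool} :
    Aᴾ x y ↔ (x.1 = y.1 ∧ x.2 = false ∧ y.2 = true ∧ IsAppendageNode E ι o x.1) ∨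
      (A x.1 y.1 ∧ x.2 = true ∧ y.2 = false) := by
  obtain ⟨u, a⟩ := x
  obtain ⟨v, b⟩ := y
  simp only [appendageAdj, prnAdj, isAppendageNode_prnAdj_iff]
  constructor
  · rintro ⟨⟨rfl, ha, hb⟩ | ⟨huv, ha, hb⟩, hu, hv⟩
    exacts [Or.inl ⟨rfl, ha, hb, hu⟩, Or.inr ⟨⟨huv, hu, hv⟩, ha, hb⟩]
  · rintro (⟨rfl, ha, hb, hu⟩ | ⟨⟨huv, hu, hv⟩, ha, hb⟩)
    exacts [⟨Or.inl ⟨rfl, ha, hb⟩, hu, hu⟩, ⟨Or.inr ⟨huv, ha, hb⟩, hu, hv⟩]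

theorem reflTransGen_fst_of_reflTransGen_appendageAdj_prnAdj {x y : V × Bool}
    (h : ReflTransGen Aᴾ x y) : ReflTransGen A x.1 y.1 := by
  induction h with
  | refl => rfl
  | tail _ hyz ih =>
    rcases appendageAdj_prnAdj_iff.1 hyz with ⟨hfst, -⟩ | ⟨hyz, -⟩
    exacts [hfst ▸ ih, ih.tail hyz]

theorem transGen_of_reflTransGen_appendageAdj_prnAdj {u v : V}
    (h : ReflTransGen Aᴾ (u, true) (v, false)) : TransGen A u v := by
  rcases ReflTransGen.cases_tail_iff _ _ _ |>.1 h with hvu | ⟨y, huy, hyv⟩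
  · cases hvu
  rcases appendageAdj_prnAdj_iff.1 hyv with ⟨-, -, h, -⟩ | ⟨hyv, -⟩
  · cases h
  exact TransGen.tail' (reflTransGen_fst_of_reflTransGen_appendageAdj_prnAdj huy) hyv

theorem reflTransGen_appendageAdj_prnAdj_of_reflTransGen {u v : V} (h : ReflTransGen A u v) :
    ReflTransGen Aᴾ (u, true) (v, true) := by
  induction h with
  | refl => rfl
  | @tail w x _ hwx ih =>
    have hP_R : Aᴾ (w, true) (x, false) := appendageAdj_prnAdj_iff.2 (.inr ⟨hwx, rfl, rfl⟩)
    have hR_P : Aᴾ (x, false) (x, true) := appendageAdj_prnAdj_iff.2 (.inl ⟨rfl, rfl, rfl, hwx.2.2⟩)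
    exact (ih.tail hP_R).tail hR_P

theorem pathEquiv_prnAdj_iff_transGen {τ : V} :
    PathEquiv (prnAdj E) (ι, false) (o, true) (τ, false) (τ, true) ↔ TransGen A τ τ := by
  refine ⟨fun h => transGen_of_reflTransGen_appendageAdj_prnAdj h.2, fun h => ?_⟩
  obtain ⟨w, hτw, hwτ⟩ := TransGen.tail'_iff.1 h
  refine ⟨.single (appendageAdj_prnAdj_iff.2 (Or.inl ⟨rfl, rfl, rfl, hwτ.2.2⟩)), ?_⟩
  exact (reflTransGen_appendageAdj_prnAdj_of_reflTransGen hτw).tail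
    (appendageAdj_prnAdj_iff.2 (Or.inr ⟨hwτ, rfl, rfl⟩))

end AppendageSubnetwork

theorem stmt_14_general {V : Type*} (E : V → V → Prop) (ι o τ : V) :
    PathEquiv (prnAdj E) (ι, false) (o, true) (τ, false) (τ, true) ↔
      (∃ c : List V, IsCycle E c ∧ τ ∈ c ∧ ∀ v ∈ c, IsAppendageNode E ι o v) := by
  rw [pathEquiv_prnAdj_iff_transGen, transGen_self_iff_exists_isCycle]
  refine exists_congr fun c => ?_
  rw [← and_assoc, and_right_comm]
  exact and_congr_left' isCycle_restrict_iff

/-- For an appendage node `τ` of the GRN, `(τ,R)` and `(τ,P)` are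
path-equivalent in the appendage subnetwork of the PRN if and only if `τ` lies on a
directed cycle of the GRN all of whose nodes are appendage nodes (a self-loop at `τ`
counts as such a cycle). -/
theorem stmt_14 {V : Type*} [Fintype V] (E : V → V → Prop) (ι o τ : V)
    (hτ : IsAppendageNode E ι o τ) :
    PathEquiv (prnAdj E) (ι, false) (o, true) (τ, false) (τ, true) ↔
      (∃ c : List V, IsCycle E c ∧ τ ∈ c ∧ ∀ v ∈ c, IsAppendageNode E ι o v) :=
  stmt_14_general E ι o τ
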